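/- arXiv:1212.0774 — 2 statements merged into one kernel-verified Lean document; each statement's English description precedes it below -/
import Mathlib

section
/- Let H be a finite group acting by automorphisms on a finite group G. Fix orbit representatives g_i, g_j with stabilizers H_i, H_j, and fix x ∈ H. Suppose y ∈ H satisfies g_k = (^y g_i)(^{yx} g_j) for the orbit representative g_k of the element g_i · ^x g_j, and let H_k = Stab_H(g_k). Then the set {y' ∈ H : g_k = (^{y'} g_i)(^{y'x} g_j)} equals the double coset H_k y (^x H_j ∩ H_i). -/
/-- The stabilizer `Stab_H(g) = {h ∈ H : ʰg = g}` of `g ∈ G` under an action of `H`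
on `G` by automorphisms. -/
def stabSubgroup {H G : Type*} [Group H] [Group G] (φ : H →* MulAut G) (g : G) :
    Subgroup H where
  carrier := {h | φ h g = g}
  one_mem' := by simp
  mul_mem' := by
    intro a b ha hb
    simp only [Set.mem_setOf_eq, map_mul, MulAut.mul_apply] at *
    rw [hb, ha]
  inv_mem' := by
    intro a ha
    simp only [Set.mem_setOf_eq] at *
    conv_lhs => rw [← ha]
    rw [← MulAut.mul_apply, ← map_mul, inv_mul_cancel, map_one, MulAut.one_apply]

/-- Let `H` act by automorphisms on `G`, with elements `g_i, g_j, g_k` having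
stabilizers `H_i, H_j, H_k`, and fix `x ∈ H`.  If `y ∈ H` satisfies
`g_k = (ʸg_i)(ʸˣg_j)`, then the set of all `y' ∈ H` with `g_k = (ʸ'g_i)(ʸ'ˣg_j)`
equals the double coset `H_k y (ˣH_j ∩ H_i)`. -/
theorem solution_set_is_double_coset {G H : Type*} [Group G] [Finite G] [Group H] [Finite H]
    (φ : H →* MulAut G) (gi gj gk : G) (x y : H)
    (hy : gk = φ y gi * φ (y * x) gj) :
    {y' : H | gk = φ y' gi * φ (y' * x) gj} =
      {z : H | ∃ h ∈ stabSubgroup φ gk,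
        ∃ v ∈ (stabSubgroup φ gj).map (MulAut.conj x).toMonoidHom ⊓ stabSubgroup φ gi,
          z = h * y * v} := by
  have key : ∀ w : H, φ w gi * φ (w * x) gj = φ w (gi * φ x gj) := by
    intro w
    simp [map_mul, MulAut.mul_apply]
  set m := gi * φ x gj with hm
  rw [key] at hy
  ext z
  simp only [Set.mem_setOf_eq, key]
  constructor
  · intro hz
    refine ⟨z * y⁻¹, ?_, 1, one_mem _, by group⟩
    show φ (z * y⁻¹) gk = gk
    have : φ y⁻¹ gk = m := by
      rw [hy, ← MulAut.mul_apply, ← map_mul, inv_mul_cancel, map_one, MulAut.one_apply]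
    rw [map_mul, MulAut.mul_apply, this, ← hz]
  · rintro ⟨h, hh, v, hv, rfl⟩
    have hhk : φ h gk = gk := hh
    obtain ⟨⟨u, hu, rfl⟩, hvgi⟩ := hv
    have hvgi' : φ (x * u * x⁻¹) gi = gi := hvgi
    have hvm : φ ((MulAut.conj x).toMonoidHom u) m = m := by
      show φ (x * u * x⁻¹) m = m
      rw [hm, map_mul, hvgi']
      have : φ (x * u * x⁻¹) (φ x gj) = φ x gj := by
        rw [← MulAut.mul_apply, ← map_mul, mul_assoc, inv_mul_cancel, mul_one,
          map_mul, MulAut.mul_apply, show φ u gj = gj from hu]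
      rw [this]
    calc gk = φ h gk := hhk.symm
      _ = φ h (φ y (φ ((MulAut.conj x).toMonoidHom u) m)) := by rw [hvm, ← hy]
      _ = φ (h * y * (MulAut.conj x).toMonoidHom u) m := by
          simp [map_mul, MulAut.mul_apply]
end

section
/- Let R be a commutative ring, G a finite group, P a finitely generated projective left RG-module, and M a left RG-module. The map τ : Hom_R(P,R) ⊗_{RG} M → Hom_{RG}(P,M) given by τ(f ⊗ m)(p) = Σ_{g∈G} f(g^{-1}p) g·m is an isomorphism of R-modules. -/
/-!
Choose a dual basis `(sᵢ, Fᵢ)` of `P` over `R[G]` and let `fᵢ = ε ∘ Fᵢ`, where `ε` reads off the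
coefficient at `1`. Every `R[G]`-linear `F : P → R[G]` is recovered from `ε ∘ F` as
`F p = Σ_g ε(F(g⁻¹p)) g`, so `φ ↦ Σᵢ fᵢ ⊗ φ(sᵢ)` is a right inverse of `T` on the `R[G]`-linear
maps and, modulo the relations `(f·g) ⊗ m - f ⊗ g·m`, a left inverse of `T`. And `T` kills
these relations because `T(f ⊗ m) = Σ_g g ∘ (f(-) m) ∘ g⁻¹` is invariant under moving `g`
from one side of the composite to the other.
-/

open TensorProduct

/-- The action of a group element `g ∈ G` on a module `P` over the group algebra
`R[G]`, as an `R`-linear map. -/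
noncomputable def gAct (R : Type*) [CommRing R] (G : Type*) [Group G] (P : Type*) [AddCommGroup P]
    [Module (MonoidAlgebra R G) P] [Module R P] [IsScalarTower R (MonoidAlgebra R G) P]
    (g : G) : P →ₗ[R] P where
  toFun p := (MonoidAlgebra.single g (1 : R) : MonoidAlgebra R G) • p
  map_add' := by intro p q; exact smul_add _ p q
  map_smul' := by intro r p; exact (smul_comm r _ p).symm

open MonoidAlgebra

theorem Module.Projective.exists_dual_basis (A P : Type*) [Ring A] [AddCommGroup P] [Module A P]
    [Module.Projective A P] [Module.Finite A P] :
    ∃ (n : ℕ) (s : Fin n → P) (F : Fin n → P →ₗ[A] A), ∀ q, ∑ i, F i q • s i = q := by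
  classical
  obtain ⟨n, f, g, -, -, hfg⟩ := Module.Finite.exists_comp_eq_id_of_projective A P
  refine ⟨n, fun i => f (Pi.single i 1), fun i => LinearMap.proj i ∘ₗ g, fun q => ?_⟩
  conv_rhs => rw [← LinearMap.id_apply (R := A) q, ← hfg, LinearMap.comp_apply,
    ← Finset.univ_sum_single (g q)]
  simp only [map_sum, LinearMap.comp_apply, LinearMap.proj_apply, ← map_smul, ← Pi.single_smul',
    smul_eq_mul, mul_one]

section GroupAction

variable {R G P : Type*} [CommRing R] [Group G] [AddCommGroup P] [Module R[G] P] [Module R P]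
  [IsScalarTower R R[G] P]

theorem gAct_apply (g : G) (p : P) : gAct R G P g p = single g (1 : R) • p := rfl

theorem gAct_mul_apply (g h : G) (p : P) :
    gAct R G P (g * h) p = gAct R G P g (gAct R G P h p) := by
  rw [gAct_apply, gAct_apply, gAct_apply, ← mul_smul, single_mul_single, one_mul]

theorem gAct_inv_apply_gAct (g : G) (p : P) : gAct R G P g⁻¹ (gAct R G P g p) = p := by
  rw [← gAct_mul_apply, inv_mul_cancel, gAct_apply, ← one_def, one_smul]

theorem gAct_apply_gAct_inv (g : G) (p : P) : gAct R G P g (gAct R G P g⁻¹ p) = p := by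
  simpa only [inv_inv] using gAct_inv_apply_gAct (R := R) g⁻¹ p

theorem smul_eq_sum_coeff_smul_gAct [Fintype G] (a : R[G]) (p : P) :
    a • p = ∑ g, a.coeff g • gAct R G P g p := by
  conv_lhs => rw [← a.sum_coeff_single, Finsupp.sum_fintype _ _ (by simp)]
  simp [Finset.sum_smul, gAct_apply, ← smul_assoc]

variable (R) in
noncomputable def coeffOneComp (F : P →ₗ[R[G]] R[G]) : P →ₗ[R] R :=
  Finsupp.lapply 1 ∘ₗ (coeffLinearEquiv R).toLinearMap ∘ₗ F.restrictScalars R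

theorem coeffOneComp_gAct_inv (F : P →ₗ[R[G]] R[G]) (g : G) (p : P) :
    coeffOneComp R F (gAct R G P g⁻¹ p) = (F p).coeff g := by
  simp [coeffOneComp, gAct_apply]

theorem sum_coeffOneComp_smul_gAct [Fintype G] (F : P →ₗ[R[G]] R[G]) (p q : P) :
    ∑ g, coeffOneComp R F (gAct R G P g⁻¹ p) • gAct R G P g q = F p • q := by
  simp only [coeffOneComp_gAct_inv, ← smul_eq_sum_coeff_smul_gAct]

end GroupAction

section Hom

variable {R G P M : Type*} [CommRing R] [Group G]
  [AddCommGroup P] [Module R[G] P] [Module R P] [IsScalarTower R R[G] P]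
  [AddCommGroup M] [Module R M]

variable (M) in
noncomputable def dualBasisSection {n : ℕ} (s : Fin n → P) (F : Fin n → P →ₗ[R[G]] R[G]) :
    (P →ₗ[R] M) →ₗ[R] (P →ₗ[R] R) ⊗[R] M :=
  ∑ i, TensorProduct.mk R (P →ₗ[R] R) M (coeffOneComp R (F i)) ∘ₗ LinearMap.applyₗ (s i)

theorem dualBasisSection_apply {n : ℕ} (s : Fin n → P) (F : Fin n → P →ₗ[R[G]] R[G])
    (φ : P →ₗ[R] M) : dualBasisSection M s F φ = ∑ i, coeffOneComp R (F i) ⊗ₜ φ (s i) := by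
  simp [dualBasisSection, LinearMap.sum_apply]

variable [Module R[G] M] [IsScalarTower R R[G] M]

variable (R G P M) in
noncomputable def balancingRelations : Submodule R ((P →ₗ[R] R) ⊗[R] M) :=
  Submodule.span R {z | ∃ (f : P →ₗ[R] R) (m : M) (g : G),
    z = (f ∘ₗ gAct R G P g) ⊗ₜ m - f ⊗ₜ gAct R G M g m}

theorem mkQ_balancingRelations_comp_gAct_tmul (f : P →ₗ[R] R) (m : M) (g : G) :
    (balancingRelations R G P M).mkQ ((f ∘ₗ gAct R G P g) ⊗ₜ m) =
      (balancingRelations R G P M).mkQ (f ⊗ₜ gAct R G M g m) :=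
  (Submodule.Quotient.eq _).mpr (Submodule.subset_span ⟨f, m, g, rfl⟩)

variable [Fintype G]

variable (R G P M) in
noncomputable def conjSum : (P →ₗ[R] M) →ₗ[R] P →ₗ[R] M :=
  ∑ g : G, LinearMap.llcomp R P M M (gAct R G M g) ∘ₗ LinearMap.lcomp R M (gAct R G P g⁻¹)

theorem conjSum_apply (φ : P →ₗ[R] M) (p : P) :
    conjSum R G P M φ p = ∑ g, gAct R G M g (φ (gAct R G P g⁻¹ p)) := by
  simp [conjSum, LinearMap.sum_apply]

theorem conjSum_apply_gAct (φ : P →ₗ[R] M) (g : G) (p : P) :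
    conjSum R G P M φ (gAct R G P g p) = gAct R G M g (conjSum R G P M φ p) := by
  simp only [conjSum_apply, map_sum]
  refine (Equiv.sum_comp (Equiv.mulLeft g) _).symm.trans (Finset.sum_congr rfl fun h _ => ?_)
  simp only [Equiv.coe_mulLeft, mul_inv_rev, gAct_mul_apply, gAct_inv_apply_gAct]

theorem conjSum_comp_gAct (φ : P →ₗ[R] M) (g : G) :
    conjSum R G P M (φ ∘ₗ gAct R G P g) = conjSum R G P M (gAct R G M g ∘ₗ φ) := by
  ext p
  simp only [conjSum_apply]
  refine (Equiv.sum_comp (Equiv.mulRight g) _).symm.trans (Finset.sum_congr rfl fun h _ => ?_)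
  simp only [Equiv.coe_mulRight, mul_inv_rev, gAct_mul_apply, gAct_apply_gAct_inv,
    LinearMap.comp_apply]

variable (R G P M) in
noncomputable def conjSumDualTensorHom : (P →ₗ[R] R) ⊗[R] M →ₗ[R] P →ₗ[R] M :=
  conjSum R G P M ∘ₗ dualTensorHom R P M

theorem conjSumDualTensorHom_tmul (f : P →ₗ[R] R) (m : M) (p : P) :
    conjSumDualTensorHom R G P M (f ⊗ₜ m) p = ∑ g, f (gAct R G P g⁻¹ p) • gAct R G M g m := by
  simp [conjSumDualTensorHom, conjSum_apply, dualTensorHom_apply]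

theorem balancingRelations_le_ker :
    balancingRelations R G P M ≤ LinearMap.ker (conjSumDualTensorHom R G P M) := by
  rw [balancingRelations, Submodule.span_le]
  rintro _ ⟨f, m, g, rfl⟩
  have hf : dualTensorHom R P M ((f ∘ₗ gAct R G P g) ⊗ₜ m) =
      dualTensorHom R P M (f ⊗ₜ m) ∘ₗ gAct R G P g := by
    ext; simp [dualTensorHom_apply]
  have hm : dualTensorHom R P M (f ⊗ₜ gAct R G M g m) =
      gAct R G M g ∘ₗ dualTensorHom R P M (f ⊗ₜ m) := by
    ext; simp [dualTensorHom_apply]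
  simp only [SetLike.mem_coe, LinearMap.mem_ker, map_sub, sub_eq_zero, conjSumDualTensorHom,
    LinearMap.comp_apply, hf, hm, conjSum_comp_gAct]

section DualBasis

variable {n : ℕ} {s : Fin n → P} {F : Fin n → P →ₗ[R[G]] R[G]}
  (hF : ∀ q, ∑ i, F i q • s i = q)
include hF

theorem conjSumDualTensorHom_dualBasisSection (φ : P →ₗ[R] M)
    (hφ : ∀ g p, φ (gAct R G P g p) = gAct R G M g (φ p)) :
    conjSumDualTensorHom R G P M (dualBasisSection M s F φ) = φ := by
  ext p
  rw [dualBasisSection_apply, map_sum, LinearMap.sum_apply]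
  conv_rhs => rw [← hF p, map_sum]
  refine Finset.sum_congr rfl fun i _ => ?_
  rw [conjSumDualTensorHom_tmul, ← sum_coeffOneComp_smul_gAct, map_sum]
  simp only [map_smul, hφ]

theorem sum_sum_smul_coeffOneComp_comp_gAct (f : P →ₗ[R] R) :
    (∑ i, ∑ g, f (gAct R G P g⁻¹ (s i)) • (coeffOneComp R (F i) ∘ₗ gAct R G P g) : P →ₗ[R] R) =
      f := by
  ext p
  conv_rhs => rw [← hF p, map_sum]
  simp only [LinearMap.sum_apply, LinearMap.smul_apply, LinearMap.comp_apply, smul_eq_mul]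
  refine Finset.sum_congr rfl fun i _ => ?_
  rw [← sum_coeffOneComp_smul_gAct, map_sum]
  exact Fintype.sum_equiv (Equiv.inv G) _ _ fun g => by simp [mul_comm]

theorem mkQ_dualBasisSection_conjSumDualTensorHom (x : (P →ₗ[R] R) ⊗[R] M) :
    (balancingRelations R G P M).mkQ (dualBasisSection M s F (conjSumDualTensorHom R G P M x)) =
      (balancingRelations R G P M).mkQ x := by
  induction x using TensorProduct.induction_on with
  | zero => simp only [map_zero]
  | add x y hx hy => simp only [map_add, hx, hy]
  | tmul f m =>
    conv_rhs => rw [← sum_sum_smul_coeffOneComp_comp_gAct hF f]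
    simp only [dualBasisSection_apply, conjSumDualTensorHom_tmul, tmul_sum, sum_tmul,
      ← smul_tmul', tmul_smul, map_sum, map_smul, mkQ_balancingRelations_comp_gAct_tmul]

theorem ker_conjSumDualTensorHom_le :
    LinearMap.ker (conjSumDualTensorHom R G P M) ≤ balancingRelations R G P M := fun x hx => by
  have h := mkQ_dualBasisSection_conjSumDualTensorHom hF x
  rw [LinearMap.mem_ker.mp hx, map_zero, map_zero] at h
  exact (Submodule.Quotient.mk_eq_zero _).mp h.symm

end DualBasis

end Hom

/-- `T` stands for `τ` composed with the quotient map `Hom_R(P,R) ⊗_R M → Hom_R(P,R) ⊗_{R[G]} M`: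
its kernel is the span of the relations defining the tensor product over `R[G]`. -/
theorem duality_hom_tensor_iso (R : Type*) [CommRing R] (G : Type*) [Group G] [Fintype G]
    (P M : Type*) [AddCommGroup P] [Module (MonoidAlgebra R G) P] [Module R P]
    [IsScalarTower R (MonoidAlgebra R G) P] [Module.Projective (MonoidAlgebra R G) P]
    [Module.Finite (MonoidAlgebra R G) P]
    [AddCommGroup M] [Module (MonoidAlgebra R G) M] [Module R M]
    [IsScalarTower R (MonoidAlgebra R G) M] :
    ∃ T : ((P →ₗ[R] R) ⊗[R] M) →ₗ[R] (P →ₗ[R] M),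
      (∀ (f : P →ₗ[R] R) (m : M) (p : P),
        T (f ⊗ₜ m) p = ∑ g : G,
          f ((MonoidAlgebra.single g⁻¹ (1 : R) : MonoidAlgebra R G) • p) •
            ((MonoidAlgebra.single g (1 : R) : MonoidAlgebra R G) • m)) ∧
      (∀ (x : (P →ₗ[R] R) ⊗[R] M) (g : G) (p : P),
        T x ((MonoidAlgebra.single g (1 : R) : MonoidAlgebra R G) • p) =
          (MonoidAlgebra.single g (1 : R) : MonoidAlgebra R G) • T x p) ∧
      (∀ φ : P →ₗ[R] M,
        (∀ (g : G) (p : P),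
          φ ((MonoidAlgebra.single g (1 : R) : MonoidAlgebra R G) • p) =
            (MonoidAlgebra.single g (1 : R) : MonoidAlgebra R G) • φ p) →
        ∃ x, T x = φ) ∧
      LinearMap.ker T = Submodule.span R
        {z : (P →ₗ[R] R) ⊗[R] M | ∃ (f : P →ₗ[R] R) (m : M) (g : G),
          z = (f ∘ₗ gAct R G P g) ⊗ₜ m -
            f ⊗ₜ ((MonoidAlgebra.single g (1 : R) : MonoidAlgebra R G) • m)} := by
  obtain ⟨n, s, F, hF⟩ := Module.Projective.exists_dual_basis (MonoidAlgebra R G) P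
  exact ⟨conjSumDualTensorHom R G P M, conjSumDualTensorHom_tmul,
    fun x => conjSum_apply_gAct (dualTensorHom R P M x),
    fun φ hφ => ⟨_, conjSumDualTensorHom_dualBasisSection hF φ hφ⟩,
    le_antisymm (ker_conjSumDualTensorHom_le hF) balancingRelations_le_ker⟩
end
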